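/- (Concavity implies threshold contracts suffice) Consider actions 1,…,n with distributions f₁,…,f_n on {0,…,m} and strictly increasing costs c₁ < … < c_n, satisfying pairwise MLR (f_i ≺ f_{i'} whenever c_i < c_{i'}). Let j* be the crossing point of f_n over f_{n−1}, and let s_i = S_{f_i}(j*−1) be the crossing-point survival. Suppose the function mapping c_i to s_i is concave in the sense that b_i := (c_n − c_i)/(s_n − s_i) is monotonically non-decreasing in i for i < n (with s_n > s_i for all i < n). Then the threshold contract t_j = b_{n−1}·𝟙[j ≥ j*] satisfies all incentive compatibility constraints: for every i < n, Σ_j f_n(j)·t_j − c_n ≥ Σ_j f_i(j)·t_j − c_i. -/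
import Mathlib


/-- Survival probability at `j* - 1`: the probability mass at or above `j*`. -/
noncomputable def survivalFrom {m : ℕ} (f : Fin (m + 1) → ℝ) (jstar : Fin (m + 1)) : ℝ :=
  ∑ j ∈ Finset.univ.filter (fun j => jstar ≤ j), f j

theorem concavity_implies_threshold_ic {m N : ℕ}
    (f : Fin (N + 2) → Fin (m + 1) → ℝ) (c : Fin (N + 2) → ℝ)
    (hf : ∀ i j, 0 ≤ f i j) (hfs : ∀ i, ∑ j, f i j = 1)
    (hc : StrictMono c)
    (hMLR : ∀ i i' : Fin (N + 2), i < i' →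
      ∀ j j' : Fin (m + 1), j ≤ j' → f i' j * f i j' ≤ f i' j' * f i j)
    (jstar : Fin (m + 1))
    (hcross_ge : f (Fin.castSucc (Fin.last N)) jstar ≤ f (Fin.last (N + 1)) jstar)
    (hcross_lt : ∀ j, j < jstar →
      f (Fin.last (N + 1)) j < f (Fin.castSucc (Fin.last N)) j)
    (hs_lt : ∀ i, i < Fin.last (N + 1) →
      survivalFrom (f i) jstar < survivalFrom (f (Fin.last (N + 1))) jstar)
    (hb_mono : ∀ i i' : Fin (N + 2), i ≤ i' → i' < Fin.last (N + 1) →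
      (c (Fin.last (N + 1)) - c i) /
          (survivalFrom (f (Fin.last (N + 1))) jstar - survivalFrom (f i) jstar)
        ≤ (c (Fin.last (N + 1)) - c i') /
          (survivalFrom (f (Fin.last (N + 1))) jstar - survivalFrom (f i') jstar)) :
    ∀ i, i < Fin.last (N + 1) →
      ∑ j, f i j *
          (if jstar ≤ j then
            (c (Fin.last (N + 1)) - c (Fin.castSucc (Fin.last N))) /
              (survivalFrom (f (Fin.last (N + 1))) jstar
                - survivalFrom (f (Fin.castSucc (Fin.last N))) jstar)
          else 0) - c i
      ≤ ∑ j, f (Fin.last (N + 1)) j *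
          (if jstar ≤ j then
            (c (Fin.last (N + 1)) - c (Fin.castSucc (Fin.last N))) /
              (survivalFrom (f (Fin.last (N + 1))) jstar
                - survivalFrom (f (Fin.castSucc (Fin.last N))) jstar)
          else 0) - c (Fin.last (N + 1)) := by
  intro i hi
  set n := Fin.last (N + 1) with hn
  set p := Fin.castSucc (Fin.last N) with hp
  set b := (c n - c p) / (survivalFrom (f n) jstar - survivalFrom (f p) jstar) with hbdef
  have hsum : ∀ k, ∑ j, f k j * (if jstar ≤ j then b else 0)
      = survivalFrom (f k) jstar * b := by
    intro k
    rw [survivalFrom, Finset.sum_mul]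
    simp only [mul_ite, mul_zero]
    rw [← Finset.sum_filter]
  rw [hsum, hsum]
  have hpn : p < n := Fin.castSucc_lt_last (Fin.last N)
  have hip : i ≤ p := by
    have := hi
    rw [Fin.lt_def] at this
    rw [Fin.le_def]
    simpa [hn, hp] using Nat.lt_succ_iff.mp (by simpa [hn] using this)
  have hd : 0 < survivalFrom (f n) jstar - survivalFrom (f i) jstar :=
    sub_pos.mpr (hs_lt i hi)
  have hmono := hb_mono i p hip hpn
  rw [div_le_iff₀ hd] at hmono
  nlinarith [hmono]
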